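/- Suppose y is a binary random variable depending on (x, r), t is a real random variable independent of y given (x, r), y* = 1{y > t}, and r* = (−t, r). Then P(y > s | x, r) is strictly increasing in r for each fixed s (in the sense that r1 ≺ r2 implies P(y > s | x, r = r1) < P(y > s | x, r = r2), and decreasing thresholds increase the probability) if and only if P(y* = 1 | x, r*) is strictly increasing in r* with respect to the coordinatewise strict order: r1* ≺ r2* implies P(y* = 1 | x, r* = r1*) < P(y* = 1 | x, r* = r2*). -/
import Mathlib


/-- Lemma 1 (binary reduction). Let `P r s = P(y > s | x, r)` be the conditional
tail probability of `y` (for a fixed `x`), and let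
`Pstar r* = P(y* = 1 | x, r*)` where `y* = 1{y > t}`, `r* = (−t, r)` and
`t ⫫ y | (x, r)`, so that `Pstar v = P (v ∘ succ) (-(v 0))`.
Then `P` is strictly increasing in `r` (for each fixed threshold `s`) and
strictly increasing as the threshold decreases, if and only if `Pstar` is
strictly increasing with respect to the coordinatewise strict order on `ℝ^{m+1}`. -/
theorem monotone_iff_augmented_monotone {m : ℕ}
    (P : (Fin m → ℝ) → ℝ → ℝ)
    (Pstar : (Fin (m + 1) → ℝ) → ℝ)
    (hPstar : ∀ v : Fin (m + 1) → ℝ, Pstar v = P (fun i => v i.succ) (-(v 0))) :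
    ((∀ s : ℝ, ∀ r1 r2 : Fin m → ℝ,
        ((∀ k, r1 k ≤ r2 k) ∧ r1 ≠ r2) → P r1 s < P r2 s) ∧
      (∀ r : Fin m → ℝ, ∀ s1 s2 : ℝ, s1 < s2 → P r s2 < P r s1))
    ↔ (∀ v1 v2 : Fin (m + 1) → ℝ,
        ((∀ k, v1 k ≤ v2 k) ∧ v1 ≠ v2) → Pstar v1 < Pstar v2) := by
  constructor
  · rintro ⟨hr, hs⟩ v1 v2 ⟨hle, hne⟩
    rw [hPstar v1, hPstar v2]
    set r1 : Fin m → ℝ := fun i => v1 i.succ with hr1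
    set r2 : Fin m → ℝ := fun i => v2 i.succ with hr2
    have hrle : ∀ k, r1 k ≤ r2 k := fun k => hle k.succ
    have h0 : v1 0 ≤ v2 0 := hle 0
    by_cases hteq : r1 = r2
    · -- tails equal, so v1 0 < v2 0
      have h0lt : v1 0 < v2 0 := by
        rcases lt_or_eq_of_le h0 with h | h
        · exact h
        · exfalso; apply hne; funext i
          refine Fin.cases h (fun j => ?_) i
          exact congrFun hteq j
      calc P r1 (-(v1 0)) = P r2 (-(v1 0)) := by rw [hteq]
        _ < P r2 (-(v2 0)) := hs r2 _ _ (by linarith)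
    · have h1 : P r1 (-(v1 0)) < P r2 (-(v1 0)) := hr _ r1 r2 ⟨hrle, hteq⟩
      rcases lt_or_eq_of_le h0 with h | h
      · exact h1.trans (hs r2 _ _ (by linarith))
      · rw [show v2 0 = v1 0 from h.symm]; exact h1
  · intro h
    constructor
    · rintro s r1 r2 ⟨hle, hne⟩
      have := h (Fin.cons (-s) r1) (Fin.cons (-s) r2) ⟨?_, ?_⟩
      · rw [hPstar, hPstar] at this
        simpa using this
      · intro k; refine Fin.cases le_rfl (fun j => ?_) k
        simpa using hle j
      · intro hc; apply hne; funext j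
        have := congrFun hc j.succ
        simpa using this
    · intro r s1 s2 h12
      have := h (Fin.cons (-s2) r) (Fin.cons (-s1) r) ⟨?_, ?_⟩
      · rw [hPstar, hPstar] at this
        simpa using this
      · intro k; refine Fin.cases (by simpa using h12.le) (fun j => ?_) k
        simp
      · intro hc
        have := congrFun hc 0
        simp at this
        linarith
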